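/- Let M ∈ ℝ^{d×d} be symmetric positive semidefinite whose top two eigenvalues satisfy λ₁ > λ₂ ≥ 0, and let f(x) = (1/2)‖xxᵀ − M‖_F². If x† is a stationary point of f (i.e., ∇f(x†) = 0, equivalently M x† = ‖x†‖² x†) with x† ∉ {√λ₁·v₁, −√λ₁·v₁}, then v₁ᵀ ∇²f(x†) v₁ ≤ λ₂ − λ₁ < 0; in particular, every such stationary point is a strict saddle point of f. -/

import Mathlib

open scoped RealInnerProductSpace

/-!
A stationary point satisfies `M x = ‖x‖² x`, so its component `⟪vᵢ, x⟫` vanishes unless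
`λᵢ = ‖x‖²`. If `⟪v₁, x⟫ ≠ 0`, then `‖x‖² = λ₁`, the gap kills every other component and
`x = ±√λ₁ v₁`. Hence `x ⊥ v₁`, and either `x = 0` or `‖x‖² = λᵢ` for some `i ≥ 2`, so
`‖x‖² ≤ λ₂`. The double sum defining `f` makes its Hessian `2 (‖x‖² I + 2 x xᵀ - M)`, so
`v₁ᵀ ∇²f v₁ = 2 (‖x‖² - λ₁) ≤ 2 (λ₂ - λ₁) ≤ λ₂ - λ₁`.
-/

section Calculus

variable {E : Type*} [NormedAddCommGroup E] [InnerProductSpace ℝ E] (T : E →L[ℝ] E)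

theorem hasGradientAt_half_inner_self_sq_sub_inner_apply [CompleteSpace E]
    (hT : (T : E →ₗ[ℝ] E).IsSymmetric) (y : E) :
    HasGradientAt (fun x => 1 / 2 * ⟪x, x⟫ ^ 2 - ⟪x, T x⟫)
      ((2 * ⟪y, y⟫) • y - (2 : ℝ) • T y) y := by
  rw [hasGradientAt_iff_hasFDerivAt]
  have hq := (hasFDerivAt_id y).inner ℝ (hasFDerivAt_id y)
  refine (((hq.pow 2).const_mul (1 / 2)).sub
    ((hasFDerivAt_id y).inner ℝ T.hasFDerivAt)).congr_fderiv ?_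
  ext u
  have hTu : ⟪y, T u⟫ = ⟪T y, u⟫ := (hT y u).symm
  simp only [InnerProductSpace.toDual_apply_apply, sub_apply, smul_apply,
    ContinuousLinearMap.comp_apply, ContinuousLinearMap.prod_apply, ContinuousLinearMap.id_apply,
    fderivInnerCLM_apply, id_eq, inner_sub_left, real_inner_smul_left, smul_eq_mul,
    real_inner_comm u y, real_inner_comm (T y) u, hTu]
  ring

theorem fderiv_gradient_half_inner_self_sq_sub_inner_apply (x u : E) :
    fderiv ℝ (fun y => (2 * ⟪y, y⟫) • y - (2 : ℝ) • T y) x u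
      = (4 * ⟪x, u⟫) • x + (2 * ⟪x, x⟫) • u - (2 : ℝ) • T u := by
  have hq := (hasFDerivAt_id x).inner ℝ (hasFDerivAt_id x)
  rw [HasFDerivAt.fderiv (f := fun y => (2 * ⟪y, y⟫) • y - (2 : ℝ) • T y)
    (((hq.const_mul 2).smul (hasFDerivAt_id x)).sub (T.hasFDerivAt.const_smul 2))]
  simp only [sub_apply, add_apply, smul_apply, ContinuousLinearMap.smulRight_apply,
    ContinuousLinearMap.comp_apply, ContinuousLinearMap.prod_apply, ContinuousLinearMap.id_apply,
    fderivInnerCLM_apply, id_eq, smul_eq_mul, real_inner_comm u x]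
  module

theorem inner_fderiv_gradient_half_inner_self_sq_sub_inner_apply_eigenvector {x u : E} {μ : ℝ}
    (hu : T u = μ • u) (hu₁ : ‖u‖ = 1) (hxu : ⟪x, u⟫ = 0) :
    ⟪u, fderiv ℝ (fun y => (2 * ⟪y, y⟫) • y - (2 : ℝ) • T y) x u⟫ = 2 * ⟪x, x⟫ - 2 * μ := by
  rw [fderiv_gradient_half_inner_self_sq_sub_inner_apply, hu, inner_sub_right, inner_add_right,
    real_inner_smul_right, real_inner_smul_right, real_inner_smul_right, real_inner_smul_right,
    real_inner_self_eq_norm_sq u, hu₁, real_inner_comm x u, hxu]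
  ring

end Calculus

theorem half_sum_sq_mul_sub_eq {n : Type*} [Fintype n] [DecidableEq n] (M : Matrix n n ℝ)
    (x : EuclideanSpace ℝ n) :
    1 / 2 * ∑ i, ∑ j, (x i * x j - M i j) ^ 2 = 1 / 2 * ⟪x, x⟫ ^ 2
      - ⟪x, Matrix.toEuclideanCLM (𝕜 := ℝ) M x⟫ + 1 / 2 * ∑ i, ∑ j, M i j ^ 2 := by
  have hxx : ⟪x, x⟫ = ∑ i, x i * x i := by
    simp only [PiLp.inner_apply, RCLike.inner_apply, conj_trivial]
  rw [Matrix.inner_toEuclideanCLM, hxx, sq, Finset.sum_mul_sum]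
  simp only [dotProduct, Matrix.mulVec, Finset.mul_sum, ← Finset.sum_sub_distrib,
    ← Finset.sum_add_distrib]
  refine Finset.sum_congr rfl fun i _ => Finset.sum_congr rfl fun j _ => ?_
  ring

theorem gradient_half_sum_sq_mul_sub {n : Type*} [Fintype n] [DecidableEq n]
    (M : Matrix n n ℝ) (hM : M.IsHermitian) :
    gradient (fun x : EuclideanSpace ℝ n => 1 / 2 * ∑ i, ∑ j, (x i * x j - M i j) ^ 2)
      = fun y => (2 * ⟪y, y⟫) • y - (2 : ℝ) • Matrix.toEuclideanCLM (𝕜 := ℝ) M y := by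
  funext y
  simp_rw [half_sum_sq_mul_sub_eq]
  rw [gradient, fderiv_add_const]
  exact (hasGradientAt_half_inner_self_sq_sub_inner_apply (Matrix.toEuclideanCLM (𝕜 := ℝ) M)
    (Matrix.isSymmetric_toEuclideanLin_iff.mpr hM) y).gradient

section Spectral

theorem LinearMap.IsSymmetric.inner_eq_zero_of_eigenvalue_ne {𝕜 E : Type*} [RCLike 𝕜]
    [NormedAddCommGroup E] [InnerProductSpace 𝕜 E] {T : E →ₗ[𝕜] E} (hT : T.IsSymmetric)
    {u w : E} {μ ν : 𝕜} (hu : T u = μ • u) (hw : T w = ν • w) (hμν : μ ≠ ν) :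
    inner 𝕜 u w = 0 :=
  hT.orthogonalFamily_eigenspaces hμν ⟨u, Module.End.mem_eigenspace_iff.mpr hu⟩
    ⟨w, Module.End.mem_eigenspace_iff.mpr hw⟩

theorem OrthonormalBasis.eq_inner_smul_of_inner_eq_zero {ι 𝕜 E : Type*} [Fintype ι] [RCLike 𝕜]
    [NormedAddCommGroup E] [InnerProductSpace 𝕜 E] (b : OrthonormalBasis ι 𝕜 E) {x : E} {i₀ : ι}
    (h : ∀ i ≠ i₀, inner 𝕜 (b i) x = 0) : x = inner 𝕜 (b i₀) x • b i₀ :=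
  calc x = ∑ i, inner 𝕜 (b i) x • b i := (b.sum_repr' x).symm
    _ = inner 𝕜 (b i₀) x • b i₀ :=
      Finset.sum_eq_single i₀ (fun i _ hi => by rw [h i hi, zero_smul]) (by simp)

variable {ι E : Type*} [Fintype ι] [NormedAddCommGroup E] [InnerProductSpace ℝ E]
  {T : E →ₗ[ℝ] E} {b : OrthonormalBasis ι ℝ E} {lam : ι → ℝ} {x : E}

theorem inner_top_eigenvector_eq_zero_of_apply_eq_inner_self_smul (hT : T.IsSymmetric)
    (hb : ∀ i, T (b i) = lam i • b i) (hx : T x = ⟪x, x⟫ • x) {i₀ : ι}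
    (hgap : ∀ i ≠ i₀, lam i < lam i₀) (hne₁ : x ≠ √(lam i₀) • b i₀)
    (hne₂ : x ≠ -√(lam i₀) • b i₀) : ⟪b i₀, x⟫ = 0 := by
  by_contra h₀
  have hxx : ⟪x, x⟫ = lam i₀ := by
    by_contra hne
    exact h₀ (hT.inner_eq_zero_of_eigenvalue_ne (hb i₀) hx (Ne.symm hne))
  have hx_eq : x = ⟪b i₀, x⟫ • b i₀ := b.eq_inner_smul_of_inner_eq_zero fun i hi =>
    hT.inner_eq_zero_of_eigenvalue_ne (hb i) hx (hxx ▸ (hgap i hi).ne)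
  have hsq : √(lam i₀) = |⟪b i₀, x⟫| := by
    rw [← Real.sqrt_sq_eq_abs, ← hxx]
    conv_lhs => rw [hx_eq]
    rw [real_inner_smul_left, real_inner_smul_right, real_inner_self_eq_norm_sq, b.norm_eq_one]
    ring_nf
  rcases abs_choice ⟪b i₀, x⟫ with h | h
  · exact hne₁ (by rwa [hsq, h])
  · exact hne₂ (by rwa [hsq, h, neg_neg])

theorem inner_self_le_of_apply_eq_inner_self_smul (hT : T.IsSymmetric)
    (hb : ∀ i, T (b i) = lam i • b i) (hx : T x = ⟪x, x⟫ • x) {i₀ : ι} (h₀ : ⟪b i₀, x⟫ = 0)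
    {μ : ℝ} (hμ : 0 ≤ μ) (hle : ∀ i ≠ i₀, lam i ≤ μ) : ⟪x, x⟫ ≤ μ := by
  rcases eq_or_ne x 0 with rfl | hx₀
  · simpa using hμ
  obtain ⟨i, hi⟩ : ∃ i, ⟪b i, x⟫ ≠ 0 := by
    by_contra! h
    exact hx₀ (by simpa [h] using (b.sum_repr' x).symm)
  have hii₀ : i ≠ i₀ := by
    rintro rfl
    exact hi h₀
  have hlam : lam i = ⟪x, x⟫ := by
    by_contra hne
    exact hi (hT.inner_eq_zero_of_eigenvalue_ne (hb i) hx hne)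
  exact hlam ▸ hle i hii₀

end Spectral

/-- For a symmetric PSD matrix `M` with eigengap `λ₁ > λ₂ ≥ 0` between its
top two eigenvalues, every stationary point of `f(x) = (1/2)‖xxᵀ - M‖_F²` other than
`±√λ₁ • v₁` satisfies `v₁ᵀ ∇²f(x†) v₁ ≤ λ₂ - λ₁ < 0`; in particular it is a strict
saddle point. -/
theorem other_stationary_points_are_strict_saddles
    (d : ℕ) (hd : 2 ≤ d) (M : Matrix (Fin d) (Fin d) ℝ)
    (hpsd : M.PosSemidef)
    (lam : Fin d → ℝ) (v : Fin d → EuclideanSpace ℝ (Fin d))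
    (hortho : Orthonormal ℝ v)
    (heig : ∀ i, M.mulVec (v i) = lam i • v i)
    (hmono : ∀ i j : Fin d, i ≤ j → lam j ≤ lam i)
    (hgap : lam ⟨1, by omega⟩ < lam ⟨0, by omega⟩)
    (hnn : 0 ≤ lam ⟨1, by omega⟩)
    (f : EuclideanSpace ℝ (Fin d) → ℝ)
    (hf : f = fun x => (1 / 2) * ∑ i, ∑ j, (x i * x j - M i j) ^ 2)
    (x : EuclideanSpace ℝ (Fin d))
    (hgrad : gradient f x = 0)
    (hne₁ : x ≠ Real.sqrt (lam ⟨0, by omega⟩) • v ⟨0, by omega⟩)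
    (hne₂ : x ≠ -(Real.sqrt (lam ⟨0, by omega⟩)) • v ⟨0, by omega⟩) :
    ⟪v ⟨0, by omega⟩, (fderiv ℝ (gradient f) x) (v ⟨0, by omega⟩)⟫
        ≤ lam ⟨1, by omega⟩ - lam ⟨0, by omega⟩ ∧
      lam ⟨1, by omega⟩ - lam ⟨0, by omega⟩ < 0 ∧
      ∃ u : EuclideanSpace ℝ (Fin d), u ≠ 0 ∧ ⟪u, (fderiv ℝ (gradient f) x) u⟫ < 0 := by
  set i₀ : Fin d := ⟨0, by omega⟩
  set i₁ : Fin d := ⟨1, by omega⟩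
  set T := Matrix.toEuclideanCLM (𝕜 := ℝ) M
  have hT : (T : EuclideanSpace ℝ (Fin d) →ₗ[ℝ] _).IsSymmetric :=
    Matrix.isSymmetric_toEuclideanLin_iff.mpr hpsd.isHermitian
  obtain ⟨b, rfl⟩ : ∃ b : OrthonormalBasis (Fin d) ℝ (EuclideanSpace ℝ (Fin d)), ⇑b = v := by
    obtain ⟨b, hb⟩ := (hortho.comp _ Subtype.val_injective)
      |>.exists_orthonormalBasis_extension_of_card_eq (s := Set.univ) (by simp)
    exact ⟨b, funext fun i => hb i trivial⟩
  have hTb : ∀ i, T (b i) = lam i • b i := fun i => WithLp.ofLp_injective 2 (heig i)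
  rw [hf, gradient_half_sum_sq_mul_sub M hpsd.isHermitian] at hgrad ⊢
  have hstat : T x = ⟪x, x⟫ • x := by
    rw [sub_eq_zero, mul_smul] at hgrad
    exact (smul_right_injective _ two_ne_zero hgrad).symm
  have hi₁_le : ∀ i ≠ i₀, i₁ ≤ i := fun i hi => by
    rw [Fin.le_def]
    exact Nat.one_le_iff_ne_zero.mpr fun h => hi (Fin.ext h)
  have h₀ : ⟪b i₀, x⟫ = 0 := inner_top_eigenvector_eq_zero_of_apply_eq_inner_self_smul hT hTb
    hstat (fun i hi => (hmono _ _ (hi₁_le i hi)).trans_lt hgap) hne₁ hne₂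
  have hxx : ⟪x, x⟫ ≤ lam i₁ := inner_self_le_of_apply_eq_inner_self_smul hT hTb hstat h₀ hnn
    fun i hi => hmono _ _ (hi₁_le i hi)
  have hval := inner_fderiv_gradient_half_inner_self_sq_sub_inner_apply_eigenvector T (hTb i₀)
    (b.norm_eq_one i₀) ((real_inner_comm _ _).trans h₀)
  exact ⟨by linarith, by linarith, b i₀, b.orthonormal.ne_zero i₀, by linarith⟩
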